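/- arXiv:1503.08594 — 5 statements merged into one kernel-verified Lean document; each statement's English description precedes it below -/
import Mathlib

section
/- Let p, q > 1 be coprime integers and let n be a positive integer. Then the number of finitely supported functions a : {q^k p^ℓ : k, ℓ ∈ ℕ} → {0, 1, …, q−1} with Σ_{k,ℓ} a(q^k p^ℓ)·q^k p^ℓ = n is equal to the number of finitely supported sequences (n_ℓ)_{ℓ ≥ 0} of non-negative integers with Σ_{ℓ ≥ 0} n_ℓ p^ℓ = n (i.e., double-base representations with bases q and p and digit set {0, 1, …, q−1} are in bijection with partitions of n into powers of p). -/
/-!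
Write each part `n_ℓ` of a partition `∑ n_ℓ p^ℓ` in base `q`, `n_ℓ = ∑ d_{k,ℓ} q^k`, and put the
digit `d_{k,ℓ}` at `q^k p^ℓ`. Since `p` and `q` are coprime, `q^k p^ℓ` determines `(k, ℓ)`, so by
uniqueness of base-`q` expansions this is a weight-preserving bijection from partitions into powers
of `p` onto double-base representations.
-/

open Set

noncomputable section

namespace Nat

def digitsFinsupp (b n : ℕ) : ℕ →₀ ℕ := (b.digits n).toFinsupp

def ofDigitsFinsupp (b : ℕ) (g : ℕ →₀ ℕ) : ℕ := g.sum fun i d => d * b ^ i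

variable {b : ℕ}

@[simp]
lemma digitsFinsupp_zero : digitsFinsupp b 0 = 0 := by
  simp [digitsFinsupp]

lemma digitsFinsupp_apply (hb : 1 < b) (n i : ℕ) : digitsFinsupp b n i = n / b ^ i % b := by
  rw [digitsFinsupp, List.toFinsupp_apply, getD_digits n i hb]

lemma digitsFinsupp_lt (hb : 1 < b) (n i : ℕ) : digitsFinsupp b n i < b :=
  digitsFinsupp_apply hb n i ▸ mod_lt _ (by omega)

@[simp]
lemma ofDigitsFinsupp_zero : ofDigitsFinsupp b 0 = 0 := Finsupp.sum_zero_index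

lemma ofDigitsFinsupp_toFinsupp (L : List ℕ) : ofDigitsFinsupp b L.toFinsupp = ofDigits b L := by
  induction L with
  | nil => simp
  | cons d L ih =>
    rw [List.toFinsupp_cons_eq_single_add_embDomain, ofDigitsFinsupp,
      Finsupp.sum_add_index' (fun _ => zero_mul _) (fun _ _ _ => add_mul _ _ _),
      Finsupp.sum_single_index (zero_mul _), Finsupp.sum_embDomain, ofDigits_cons]
    simp only [addRightEmbedding_apply, pow_succ]
    rw [← ih, ofDigitsFinsupp, Finsupp.mul_sum]
    congr 1
    · simp
    · exact Finsupp.sum_congr fun _ _ => by ring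

lemma ofDigitsFinsupp_digitsFinsupp (n : ℕ) : ofDigitsFinsupp b (digitsFinsupp b n) = n := by
  rw [digitsFinsupp, ofDigitsFinsupp_toFinsupp, ofDigits_digits]

lemma ofDigitsFinsupp_eq_add_mul (g : ℕ →₀ ℕ) :
    ofDigitsFinsupp b g =
      g 0 + b * ofDigitsFinsupp b (g.comapDomain succ succ_injective.injOn) := by
  have hsplit :
      g = Finsupp.single 0 (g 0) + (g.comapDomain succ succ_injective.injOn).mapDomain succ := by
    conv_lhs => rw [← Finsupp.single_add_erase 0 g, ← Finsupp.mapDomain_comapDomain_nat_add_one]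
    rfl
  conv_lhs => rw [hsplit]
  rw [ofDigitsFinsupp, Finsupp.sum_add_index' (fun _ => zero_mul _) (fun _ _ _ => add_mul _ _ _),
    Finsupp.sum_single_index (zero_mul _),
    Finsupp.sum_mapDomain_index (fun _ => zero_mul _) (fun _ _ _ => add_mul _ _ _),
    ofDigitsFinsupp, Finsupp.mul_sum]
  simp only [pow_zero, mul_one, pow_succ]
  congr 1
  exact Finsupp.sum_congr fun _ _ => by ring

lemma digitsFinsupp_ofDigitsFinsupp (hb : 1 < b) {g : ℕ →₀ ℕ} (hg : ∀ i, g i < b) :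
    digitsFinsupp b (ofDigitsFinsupp b g) = g := by
  ext i
  rw [digitsFinsupp_apply hb]
  induction i generalizing g with
  | zero =>
    rw [ofDigitsFinsupp_eq_add_mul, pow_zero, Nat.div_one, add_mul_mod_self_left,
      mod_eq_of_lt (hg 0)]
  | succ i ih =>
    rw [pow_succ', ← Nat.div_div_eq_div_mul, ofDigitsFinsupp_eq_add_mul,
      add_mul_div_left _ _ (by omega), div_eq_of_lt (hg 0), zero_add]
    exact ih fun i => hg (i + 1)

lemma Coprime.le_of_pow_mul_pow_eq {a c k l k' l' : ℕ} (hac : a.Coprime c) (ha : 1 < a)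
    (h : a ^ k * c ^ l = a ^ k' * c ^ l') : k ≤ k' := by
  have hdvd : a ^ k ∣ a ^ k' * c ^ l' := h ▸ Nat.dvd_mul_right _ _
  exact (Nat.pow_dvd_pow_iff_le_right ha).1 ((hac.pow k l').dvd_of_dvd_mul_right hdvd)

lemma Coprime.injective_pow_mul_pow {a c : ℕ} (hac : a.Coprime c) (ha : 1 < a) (hc : 1 < c) :
    Function.Injective fun x : ℕ × ℕ => a ^ x.1 * c ^ x.2 := by
  rintro ⟨k, l⟩ ⟨k', l'⟩ h
  dsimp only at h
  have h' : c ^ l * a ^ k = c ^ l' * a ^ k' := by rw [mul_comm, h, mul_comm]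
  ext
  · exact (hac.le_of_pow_mul_pow_eq ha h).antisymm (hac.le_of_pow_mul_pow_eq ha h.symm)
  · exact (hac.symm.le_of_pow_mul_pow_eq hc h').antisymm
      (hac.symm.le_of_pow_mul_pow_eq hc h'.symm)

end Nat

namespace DoubleBaseRep

def ofPartition (p q : ℕ) (f : ℕ →₀ ℕ) : ℕ →₀ ℕ :=
  (f.mapRange (Nat.digitsFinsupp q) Nat.digitsFinsupp_zero).uncurry.mapDomain
    fun x => p ^ x.1 * q ^ x.2

variable {p q : ℕ}

lemma sum_ofPartition (f : ℕ →₀ ℕ) :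
    ((ofPartition p q f).sum fun h c => c * h) = f.sum fun l c => c * p ^ l := by
  rw [ofPartition, Finsupp.sum_mapDomain_index (fun _ => zero_mul _) (fun _ _ _ => add_mul _ _ _),
    Finsupp.sum_uncurry_index' (g := fun l k c => c * (p ^ l * q ^ k)),
    Finsupp.sum_mapRange_index fun _ => rfl]
  refine Finsupp.sum_congr fun l _ => ?_
  conv_rhs => rw [← Nat.ofDigitsFinsupp_digitsFinsupp (b := q) (f l), Nat.ofDigitsFinsupp,
    Finsupp.sum_mul]
  exact Finsupp.sum_congr fun _ _ => by ring

lemma ofPartition_injective (hp : 1 < p) (hq : 1 < q) (hpq : p.Coprime q) :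
    Function.Injective (ofPartition p q) :=
  (Finsupp.mapDomain_injective (hpq.injective_pow_mul_pow hp hq)).comp <|
    Finsupp.curryEquiv.symm.injective.comp <| Finsupp.mapRange_injective _ _ <|
      Function.LeftInverse.injective Nat.ofDigitsFinsupp_digitsFinsupp

lemma mem_range_ofPartition (hp : 1 < p) (hq : 1 < q) (hpq : p.Coprime q) {a : ℕ →₀ ℕ} :
    a ∈ range (ofPartition p q) ↔
      (∀ h, a h ≠ 0 → ∃ k l : ℕ, h = q ^ k * p ^ l) ∧ ∀ h, a h ≤ q - 1 := by
  have hinj := hpq.injective_pow_mul_pow hp hq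
  have hrange : ∀ h, h ∈ range (fun x : ℕ × ℕ => p ^ x.1 * q ^ x.2) ↔ ∃ k l, h = q ^ k * p ^ l :=
    fun h => ⟨fun ⟨⟨l, k⟩, hx⟩ => ⟨k, l, hx ▸ mul_comm _ _⟩,
      fun ⟨k, l, hx⟩ => ⟨⟨l, k⟩, hx ▸ mul_comm _ _⟩⟩
  constructor
  · rintro ⟨f, rfl⟩
    refine ⟨fun h hh => (hrange h).1 (by_contra fun hnot => hh ?_), fun h => ?_⟩
    · exact Finsupp.mapDomain_of_notMem_range _ _ hnot
    · by_cases hh : h ∈ range (fun x : ℕ × ℕ => p ^ x.1 * q ^ x.2)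
      · obtain ⟨⟨l, k⟩, rfl⟩ := hh
        rw [ofPartition, Finsupp.mapDomain_apply hinj]
        have := Nat.digitsFinsupp_lt hq (f l) k
        simp only [Finsupp.uncurry_apply_pair, Finsupp.mapRange_apply]
        omega
      · rw [ofPartition, Finsupp.mapDomain_of_notMem_range _ _ hh]
        exact Nat.zero_le _
  · rintro ⟨hsupp, hdigit⟩
    obtain ⟨c, rfl⟩ := (Finsupp.mem_range_mapDomain_iff _ hinj a).2 fun h hh =>
      by_contra fun ha => hh ((hrange h).2 (hsupp h ha))
    have hc : ∀ x, c x < q := fun x => by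
      have := hdigit (p ^ x.1 * q ^ x.2)
      rw [Finsupp.mapDomain_apply hinj] at this
      omega
    refine ⟨c.curry.mapRange (Nat.ofDigitsFinsupp q) Nat.ofDigitsFinsupp_zero, ?_⟩
    rw [ofPartition]
    congr 1
    ext ⟨l, k⟩
    rw [Finsupp.uncurry_apply_pair, Finsupp.mapRange_apply, Finsupp.mapRange_apply,
      Nat.digitsFinsupp_ofDigitsFinsupp hq fun k => hc (l, k), Finsupp.curry_apply]

end DoubleBaseRep

theorem double_base_reps_eq_partitions_into_powers_general (p q n : ℕ)
    (hp : 1 < p) (hq : 1 < q) (hpq : Nat.Coprime p q) :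
    ({a : ℕ →₀ ℕ | (∀ h, a h ≠ 0 → ∃ k l : ℕ, h = q ^ k * p ^ l) ∧
        (∀ h, a h ≤ q - 1) ∧ (a.sum fun h c => c * h) = n}).ncard =
      ({f : ℕ →₀ ℕ | (f.sum fun l c => c * p ^ l) = n}).ncard := by
  have himage : {a : ℕ →₀ ℕ | (∀ h, a h ≠ 0 → ∃ k l : ℕ, h = q ^ k * p ^ l) ∧
      (∀ h, a h ≤ q - 1) ∧ (a.sum fun h c => c * h) = n} =
      DoubleBaseRep.ofPartition p q '' {f : ℕ →₀ ℕ | (f.sum fun l c => c * p ^ l) = n} := by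
    ext a
    rw [mem_ofPred_eq, ← and_assoc, ← DoubleBaseRep.mem_range_ofPartition hp hq hpq]
    constructor
    · rintro ⟨⟨f, rfl⟩, hn⟩
      exact ⟨f, (DoubleBaseRep.sum_ofPartition f).symm.trans hn, rfl⟩
    · rintro ⟨f, hn, rfl⟩
      exact ⟨mem_range_self f, (DoubleBaseRep.sum_ofPartition f).trans hn⟩
  rw [himage, ncard_image_of_injective _ (DoubleBaseRep.ofPartition_injective hp hq hpq)]

theorem double_base_reps_eq_partitions_into_powers (p q n : ℕ)
    (hp : 1 < p) (hq : 1 < q) (hpq : Nat.Coprime p q) (hn : 0 < n) :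
    ({a : ℕ →₀ ℕ | (∀ h, a h ≠ 0 → ∃ k l : ℕ, h = q ^ k * p ^ l) ∧
        (∀ h, a h ≤ q - 1) ∧ (a.sum fun h c => c * h) = n}).ncard =
      ({f : ℕ →₀ ℕ | (f.sum fun l c => c * p ^ l) = n}).ncard :=
  double_base_reps_eq_partitions_into_powers_general p q n hp hq hpq

end
end

section
/- Let p > 1 be an odd integer, and for a non-negative integer n let P(n) be the number of finitely supported functions a : {2^k p^ℓ : k, ℓ ∈ ℕ} → {0, 1} with Σ_{k,ℓ} a(2^k p^ℓ)·2^k p^ℓ = n (so P(0) = 1). Then for every positive integer n, P(n) = P(n−1) + P(n/p) if p divides n, and P(n) = P(n−1) otherwise. -/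
open Set

noncomputable section

/-- The number of double-base representations of `n` with bases `2` and `p` and
digits `{0, 1}`. -/
def doubleBaseP (p n : ℕ) : ℕ :=
  ({a : ℕ →₀ ℕ | (∀ h, a h ≠ 0 → ∃ k l : ℕ, h = 2 ^ k * p ^ l) ∧
      (∀ h, a h ≤ 1) ∧ (a.sum fun h c => c * h) = n}).ncard

/-!
A representation of `n` is a finite set of numbers `2 ^ k * p ^ l` summing to `n`. Since `p` is
odd, its parts with `l = 0` are exactly those not divisible by `p`: they are the binary digits of
some `m`, and the remaining parts are `p` times a representation of some `j`, with `m + p * j = n`.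
As `m` is determined by `j`, this gives `P(n) = ∑_{j ≤ n / p} P(j)`, and the recurrence is the
difference of two consecutive instances of this identity.
-/

open Finset

namespace Finsupp

variable {α : Type*}

theorem eq_of_support_eq_of_le_one {a b : α →₀ ℕ} (ha : ∀ x, a x ≤ 1)
    (hb : ∀ x, b x ≤ 1) (h : a.support = b.support) : a = b := by
  ext x
  have hx : a x ≠ 0 ↔ b x ≠ 0 := by simp only [← mem_support_iff, h]
  have := ha x
  have := hb x
  omega

theorem ncard_setOf_le_one_support_mem (S : Set (Finset α)) :
    {a : α →₀ ℕ | (∀ x, a x ≤ 1) ∧ a.support ∈ S}.ncard = S.ncard := by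
  classical
  have hinj : Set.InjOn support {a : α →₀ ℕ | (∀ x, a x ≤ 1) ∧ a.support ∈ S} :=
    fun a ha b hb => eq_of_support_eq_of_le_one ha.1 hb.1
  have himage : support '' {a : α →₀ ℕ | (∀ x, a x ≤ 1) ∧ a.support ∈ S} = S := by
    ext s
    refine ⟨fun ⟨a, ha, has⟩ => has ▸ ha.2, fun hs => ⟨Multiset.toFinsupp s.val, ?_, ?_⟩⟩
    · simpa [Multiset.toFinsupp_support, Multiset.toFinsupp_apply, hs] using
        Multiset.nodup_iff_count_le_one.1 s.nodup
    · simp [Multiset.toFinsupp_support]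
  rw [← hinj.ncard_image, himage]

theorem sum_mul_eq_sum_support_of_le_one {a : α →₀ ℕ} (ha : ∀ x, a x ≤ 1) (f : α → ℕ) :
    (a.sum fun x c => c * f x) = ∑ x ∈ a.support, f x := by
  refine Finset.sum_congr rfl fun x hx => ?_
  rw [show a x = 1 by have := ha x; have := mem_support_iff.1 hx; omega]
  exact one_mul _

end Finsupp

namespace DoubleBase

def IsTwoPowMulPow (p x : ℕ) : Prop := ∃ k l : ℕ, x = 2 ^ k * p ^ l

open Classical in
def reps (p n : ℕ) : Finset (Finset ℕ) :=
  (range (n + 1)).powerset.filter fun s => (∀ x ∈ s, IsTwoPowMulPow p x) ∧ ∑ x ∈ s, x = n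

theorem mem_reps {p n : ℕ} {s : Finset ℕ} :
    s ∈ reps p n ↔ (∀ x ∈ s, IsTwoPowMulPow p x) ∧ ∑ x ∈ s, x = n := by
  simp only [reps, mem_filter, Finset.mem_powerset, and_iff_right_iff_imp]
  rintro ⟨-, hsum⟩ x hx
  exact mem_range_succ_iff.2 (hsum ▸ single_le_sum (f := id) (fun _ _ => Nat.zero_le _) hx)

theorem doubleBaseP_eq_card_reps (p n : ℕ) : doubleBaseP p n = #(reps p n) := by
  have hset : {a : ℕ →₀ ℕ | (∀ h, a h ≠ 0 → ∃ k l : ℕ, h = 2 ^ k * p ^ l) ∧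
      (∀ h, a h ≤ 1) ∧ (a.sum fun h c => c * h) = n} =
      {a | (∀ x, a x ≤ 1) ∧ a.support ∈ (reps p n : Set (Finset ℕ))} := by
    ext a
    by_cases ha : ∀ x, a x ≤ 1
    · simp only [Set.mem_ofPred_eq, Finsupp.sum_mul_eq_sum_support_of_le_one ha fun x => x]
      simp [ha, mem_reps, IsTwoPowMulPow]
    · simp [ha]
  rw [doubleBaseP, hset, Finsupp.ncard_setOf_le_one_support_mem, Set.ncard_coe_finset]

theorem isTwoPowMulPow_two_pow (p k : ℕ) : IsTwoPowMulPow p (2 ^ k) := ⟨k, 0, by simp⟩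

theorem IsTwoPowMulPow.mul_left {p x : ℕ} (h : IsTwoPowMulPow p x) :
    IsTwoPowMulPow p (p * x) := by
  obtain ⟨k, l, rfl⟩ := h
  exact ⟨k, l + 1, by ring⟩

theorem IsTwoPowMulPow.exists_eq_two_pow {p x : ℕ} (h : IsTwoPowMulPow p x) (hx : ¬ p ∣ x) :
    ∃ k, x = 2 ^ k := by
  obtain ⟨k, l, rfl⟩ := h
  rcases l with _ | l
  · exact ⟨k, by simp⟩
  · exact absurd ⟨2 ^ k * p ^ l, by ring⟩ hx

def binaryDigits (m : ℕ) : Finset ℕ := m.bitIndices.toFinset.image (2 ^ ·)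

theorem sum_binaryDigits (m : ℕ) : ∑ x ∈ binaryDigits m, x = m := by
  rw [binaryDigits, sum_image fun _ _ _ _ h => Nat.pow_right_injective le_rfl h,
    sum_toFinset_bitIndices_two_pow]

theorem binaryDigits_sum {s : Finset ℕ} (hs : ∀ x ∈ s, ∃ k, x = 2 ^ k) :
    binaryDigits (∑ x ∈ s, x) = s := by
  obtain ⟨t, rfl⟩ : ∃ t : Finset ℕ, t.image (2 ^ ·) = s := by
    refine ⟨s.image (Nat.log 2), ?_⟩
    rw [Finset.image_image]
    refine (Finset.image_congr fun x hx => ?_).trans Finset.image_id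
    obtain ⟨k, rfl⟩ := hs x hx
    simp [Nat.log_pow]
  rw [binaryDigits, sum_image fun _ _ _ _ h => Nat.pow_right_injective le_rfl h,
    toFinset_bitIndices_sum_two_pow]

def assemble (p m : ℕ) (t : Finset ℕ) : Finset ℕ := binaryDigits m ∪ t.image (p * ·)

theorem isTwoPowMulPow_of_mem_assemble {p m x : ℕ} {t : Finset ℕ}
    (ht : ∀ y ∈ t, IsTwoPowMulPow p y) (hx : x ∈ assemble p m t) : IsTwoPowMulPow p x := by
  rcases mem_union.1 hx with hx | hx
  · obtain ⟨k, -, rfl⟩ := mem_image.1 hx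
    exact isTwoPowMulPow_two_pow p k
  · obtain ⟨y, hy, rfl⟩ := mem_image.1 hx
    exact (ht y hy).mul_left

theorem assemble_decompose {p : ℕ} {s : Finset ℕ} (hs : ∀ x ∈ s, IsTwoPowMulPow p x) :
    assemble p (∑ x ∈ s.filter (¬ p ∣ ·), x) ((s.filter (p ∣ ·)).image (· / p)) = s := by
  rw [assemble, binaryDigits_sum fun x hx =>
    (hs x (mem_filter.1 hx).1).exists_eq_two_pow (mem_filter.1 hx).2, Finset.image_image]
  refine Eq.trans ?_ (filter_union_filter_not_eq (p ∣ ·) s)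
  rw [Finset.union_comm]
  congr 1
  refine (Finset.image_congr fun x hx => ?_).trans Finset.image_id
  exact Nat.mul_div_cancel' (mem_filter.1 hx).2

section OddBase

variable {p : ℕ} (hp : 1 < p) (hodd : Odd p)
include hp hodd

theorem not_dvd_two_pow (k : ℕ) : ¬ p ∣ 2 ^ k := fun h =>
  hp.ne' ((Nat.coprime_two_right.2 hodd).pow_right k |>.eq_one_of_dvd h)

theorem IsTwoPowMulPow.div {x : ℕ} (h : IsTwoPowMulPow p x) (hx : p ∣ x) :
    IsTwoPowMulPow p (x / p) := by
  obtain ⟨k, l, rfl⟩ := h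
  rcases l with _ | l
  · exact absurd (by simpa using hx) (not_dvd_two_pow hp hodd k)
  · exact ⟨k, l, by rw [pow_succ, ← mul_assoc, Nat.mul_div_cancel _ (by omega)]⟩

theorem not_dvd_of_mem_binaryDigits {m x : ℕ} (hx : x ∈ binaryDigits m) : ¬ p ∣ x := by
  obtain ⟨k, -, rfl⟩ := mem_image.1 hx
  exact not_dvd_two_pow hp hodd k

theorem filter_dvd_assemble (m : ℕ) (t : Finset ℕ) :
    (assemble p m t).filter (p ∣ ·) = t.image (p * ·) := by
  rw [assemble, filter_union,
    filter_false_of_mem fun x hx => not_dvd_of_mem_binaryDigits hp hodd hx,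
    filter_true_of_mem fun x hx => ?_, Finset.empty_union]
  obtain ⟨y, -, rfl⟩ := mem_image.1 hx
  exact dvd_mul_right p y

theorem sum_assemble (m : ℕ) (t : Finset ℕ) :
    ∑ x ∈ assemble p m t, x = m + p * ∑ x ∈ t, x := by
  have hdisj : Disjoint (binaryDigits m) (t.image (p * ·)) :=
    disjoint_left.2 fun x hx hx' => not_dvd_of_mem_binaryDigits hp hodd hx <| by
      obtain ⟨y, -, rfl⟩ := mem_image.1 hx'
      exact dvd_mul_right p y
  rw [assemble, sum_union hdisj, sum_binaryDigits,
    sum_image fun _ _ _ _ h => Nat.eq_of_mul_eq_mul_left (by omega) h, mul_sum]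

theorem assemble_mem_reps {n j : ℕ} {t : Finset ℕ} (ht : t ∈ reps p j) (hj : p * j ≤ n) :
    assemble p (n - p * j) t ∈ reps p n := by
  obtain ⟨htTerm, rfl⟩ := mem_reps.1 ht
  refine mem_reps.2 ⟨fun x => isTwoPowMulPow_of_mem_assemble htTerm, ?_⟩
  rw [sum_assemble hp hodd]
  omega

theorem eq_of_assemble_eq {m m' : ℕ} {t t' : Finset ℕ}
    (h : assemble p m t = assemble p m' t') : t = t' := by
  have h' := congrArg (Finset.filter (p ∣ ·)) h
  rw [filter_dvd_assemble hp hodd, filter_dvd_assemble hp hodd] at h'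
  exact image_injective (mul_right_injective₀ (by omega)) h'

theorem exists_assemble_eq {n : ℕ} {s : Finset ℕ} (hs : s ∈ reps p n) :
    ∃ t ∈ reps p (∑ x ∈ t, x),
      p * ∑ x ∈ t, x ≤ n ∧ assemble p (n - p * ∑ x ∈ t, x) t = s := by
  obtain ⟨hsTerm, hsum⟩ := mem_reps.1 hs
  set m := ∑ x ∈ s.filter (¬ p ∣ ·), x
  set t := (s.filter (p ∣ ·)).image (· / p)
  have hdecomp : assemble p m t = s := assemble_decompose hsTerm
  have hmt : m + p * ∑ x ∈ t, x = n := by rw [← sum_assemble hp hodd, hdecomp, hsum]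
  have htTerm : ∀ x ∈ t, IsTwoPowMulPow p x := by
    intro x hx
    obtain ⟨y, hy, rfl⟩ := mem_image.1 hx
    exact (hsTerm y (mem_filter.1 hy).1).div hp hodd (mem_filter.1 hy).2
  refine ⟨t, mem_reps.2 ⟨htTerm, rfl⟩, by omega, ?_⟩
  rw [show n - p * ∑ x ∈ t, x = m by omega, hdecomp]

theorem card_reps (n : ℕ) : #(reps p n) = ∑ j ∈ range (n / p + 1), #(reps p j) := by
  have hmem {j : ℕ} : j ∈ range (n / p + 1) ↔ p * j ≤ n := by
    rw [Finset.mem_range, Nat.lt_succ_iff, Nat.le_div_iff_mul_le (by omega), mul_comm]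
  rw [← card_sigma]
  refine (card_nbij (fun jt => assemble p (n - p * jt.1) jt.2) ?_ ?_ ?_).symm
  · rintro ⟨j, t⟩ hjt
    obtain ⟨hj, ht⟩ := mem_sigma.1 hjt
    exact assemble_mem_reps hp hodd ht (hmem.1 hj)
  · rintro ⟨j, t⟩ hjt ⟨j', t'⟩ hjt' h
    obtain rfl : t = t' := eq_of_assemble_eq hp hodd h
    obtain rfl : j = j' :=
      (mem_reps.1 (mem_sigma.1 hjt).2).2.symm.trans (mem_reps.1 (mem_sigma.1 hjt').2).2
    rfl
  · intro s hs
    obtain ⟨t, ht, hle, rfl⟩ := exists_assemble_eq hp hodd hs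
    exact ⟨⟨_, t⟩, mem_sigma.2 ⟨hmem.2 hle, ht⟩, rfl⟩

theorem doubleBaseP_eq_sum_range (n : ℕ) :
    doubleBaseP p n = ∑ j ∈ range (n / p + 1), doubleBaseP p j := by
  simp only [doubleBaseP_eq_card_reps, card_reps hp hodd n]

theorem doubleBaseP_succ (n : ℕ) :
    doubleBaseP p (n + 1) =
      doubleBaseP p n + if p ∣ n + 1 then doubleBaseP p ((n + 1) / p) else 0 := by
  rw [doubleBaseP_eq_sum_range hp hodd (n + 1), doubleBaseP_eq_sum_range hp hodd n]
  split_ifs with h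
  · rw [Nat.succ_div_of_dvd h, sum_range_succ _ (n / p + 1)]
  · rw [Nat.succ_div_of_not_dvd h, add_zero]

end OddBase

end DoubleBase

theorem doubleBaseP_recurrence (p : ℕ) (hp : 1 < p) (hodd : Odd p)
    (n : ℕ) (hn : 0 < n) :
    (p ∣ n → doubleBaseP p n = doubleBaseP p (n - 1) + doubleBaseP p (n / p)) ∧
    (¬ p ∣ n → doubleBaseP p n = doubleBaseP p (n - 1)) := by
  obtain ⟨m, rfl⟩ : ∃ m, n = m + 1 := ⟨n - 1, by omega⟩
  rw [Nat.add_sub_cancel, DoubleBase.doubleBaseP_succ hp hodd]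
  exact ⟨fun h => by rw [if_pos h], fun h => by rw [if_neg h, add_zero]⟩

end
end

section
/- There exists an absolute constant C > 0 (one may take C = 4/(25e)) such that for all u ∈ [1/2, 2], all r > 0, all y ∈ [−1/2, 1/2], and z = e^{−r + 2πiy}, one has |F(z,u)| ≤ F(|z|,u) · exp(−C · Σ_{h ∈ S(r)} ‖hy‖²). -/
/-!
Write the factor at `h` as `∑_{j<d} w ^ j` with `w = u z ^ h = a e^{2πi h y}` and `a = u e^{-rh}`.
The first two terms already lose against the absolute values:
`|1 + w| ≤ 1 + a - a (1 - cos 2πhy) / 3`, and `1 - cos 2πt ≥ 8 ‖t‖²`.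
For `h ∈ S(r)` we have `a ≥ 1/(2e)`, so since `∑ a ^ j ≤ 2 ^ d` the factor is at most its real
counterpart times `exp(-‖hy‖² / (e 2^d))`; all other factors are bounded by the triangle
inequality. Both products converge absolutely, as each factor differs from `1` by at most
`2 ^ d e^{-rh}`.
-/

open Filter Set

noncomputable section

/-- The multiplicative monoid generated by the bases `p 0, …, p (m-1)`. -/
def multiS (m : ℕ) (p : Fin m → ℕ) : Set ℕ :=
  {h | ∃ α : Fin m → ℕ, h = ∏ j, p j ^ α j}

/-- `S(r) = {h ∈ S : h·r ≤ 1}`. -/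
def multiSr (m : ℕ) (p : Fin m → ℕ) (r : ℝ) : Set ℕ :=
  {h | h ∈ multiS m p ∧ (h : ℝ) * r ≤ 1}

/-- The distance from a real number to the nearest integer. -/
def nintDist (x : ℝ) : ℝ := |x - round x|

/-- `F(z,u) = ∏_{h ∈ S} (1 + u z^h + u² z^{2h} + ⋯ + u^{d-1} z^{(d-1)h})`. -/
def prodF (d m : ℕ) (p : Fin m → ℕ) (z : ℂ) (u : ℝ) : ℂ :=
  ∏' h : multiS m p, ∑ j ∈ Finset.range d, (u : ℂ) ^ j * z ^ (j * (h : ℕ))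

/-- The real version of `F`, evaluated at a positive real argument. -/
def prodFR (d m : ℕ) (p : Fin m → ℕ) (x u : ℝ) : ℝ :=
  ∏' h : multiS m p, ∑ j ∈ Finset.range d, u ^ j * x ^ (j * (h : ℕ))

open scoped Real

lemma pow_mul_pow_mul_eq_mul_pow {M : Type*} [CommMonoid M] (a b : M) (j n : ℕ) :
    a ^ j * b ^ (j * n) = (a * b ^ n) ^ j := by
  rw [mul_pow, mul_comm j, pow_mul]

lemma eight_mul_nintDist_sq_le_one_sub_cos (t : ℝ) :
    8 * nintDist t ^ 2 ≤ 1 - Real.cos (2 * π * t) := by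
  set s := t - round t
  have hs : |2 * π * s| ≤ π := by
    rw [abs_mul, abs_of_pos Real.two_pi_pos]
    nlinarith [abs_sub_round t, Real.pi_pos]
  have hcos : Real.cos (2 * π * t) = Real.cos (2 * π * s) := by
    rw [show 2 * π * s = 2 * π * t - round t * (2 * π) by ring, Real.cos_sub_int_mul_two_pi]
  have hquad : 2 / π ^ 2 * (2 * π * s) ^ 2 = 8 * s ^ 2 := by field_simp; ring
  rw [hcos, nintDist, sq_abs]
  linarith [Real.cos_le_one_sub_mul_cos_sq hs]

lemma sq_norm_one_add_mul_exp (a θ : ℝ) :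
    ‖1 + (a : ℂ) * Complex.exp (θ * Complex.I)‖ ^ 2 = (1 + a) ^ 2 - 2 * a * (1 - Real.cos θ) := by
  rw [Complex.sq_norm, Complex.normSq_apply]
  simp only [Complex.add_re, Complex.add_im, Complex.one_re, Complex.one_im,
    Complex.re_ofReal_mul, Complex.im_ofReal_mul, Complex.exp_ofReal_mul_I_re,
    Complex.exp_ofReal_mul_I_im]
  linear_combination a ^ 2 * Real.sin_sq_add_cos_sq θ

lemma norm_one_add_mul_exp_le {a θ : ℝ} (ha0 : 0 ≤ a) (ha2 : a ≤ 2) :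
    ‖1 + (a : ℂ) * Complex.exp (θ * Complex.I)‖ ≤ 1 + a - a * (1 - Real.cos θ) / 3 := by
  have hk : 0 ≤ a * (1 - Real.cos θ) := mul_nonneg ha0 (sub_nonneg.2 (Real.cos_le_one θ))
  have hk2 : a * (1 - Real.cos θ) ≤ 2 * a := by nlinarith [Real.neg_one_le_cos θ]
  rw [← pow_le_pow_iff_left₀ (norm_nonneg _) (by linarith) two_ne_zero,
    sq_norm_one_add_mul_exp]
  -- `(1 + a - k) ^ 2 ≥ (1 + a) ^ 2 - 2 (1 + a) k ≥ (1 + a) ^ 2 - 6 k`, `k = a (1 - cos θ) / 3`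
  nlinarith

lemma norm_ofReal_mul_exp_mul_I {a : ℝ} (ha : 0 ≤ a) (θ : ℝ) :
    ‖(a : ℂ) * Complex.exp (θ * Complex.I)‖ = a := by
  rw [norm_mul, Complex.norm_exp_ofReal_mul_I, mul_one, Complex.norm_of_nonneg ha]

lemma geom_sum_le_two_pow {a : ℝ} (ha0 : 0 ≤ a) (ha2 : a ≤ 2) (d : ℕ) :
    ∑ j ∈ Finset.range d, a ^ j ≤ 2 ^ d := by
  calc ∑ j ∈ Finset.range d, a ^ j ≤ ∑ j ∈ Finset.range d, (2 : ℝ) ^ j :=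
        Finset.sum_le_sum fun j _ => pow_le_pow_left₀ ha0 ha2 j
    _ ≤ 2 ^ d := by rw [geom_sum_eq (by norm_num)]; norm_num

lemma norm_geom_sum_le_sub {d : ℕ} (hd : 2 ≤ d) {a θ : ℝ} (ha0 : 0 ≤ a) (ha2 : a ≤ 2) :
    ‖∑ j ∈ Finset.range d, ((a : ℂ) * Complex.exp (θ * Complex.I)) ^ j‖ ≤
      ∑ j ∈ Finset.range d, a ^ j - a * (1 - Real.cos θ) / 3 := by
  obtain ⟨n, rfl⟩ := Nat.exists_eq_add_of_le' hd
  set w : ℂ := a * Complex.exp (θ * Complex.I)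
  have hw : ‖w‖ = a := norm_ofReal_mul_exp_mul_I ha0 θ
  simp only [Finset.sum_range_succ', pow_zero, zero_add, pow_one]
  calc ‖∑ j ∈ Finset.range n, w ^ (j + 1 + 1) + w + 1‖
      ≤ ‖∑ j ∈ Finset.range n, w ^ (j + 1 + 1)‖ + ‖1 + w‖ := by
        rw [add_assoc, add_comm w]; exact norm_add_le _ _
    _ ≤ ∑ j ∈ Finset.range n, a ^ (j + 1 + 1) + (1 + a - a * (1 - Real.cos θ) / 3) := by
        gcongr
        · exact (norm_sum_le _ _).trans_eq (by simp only [norm_pow, hw])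
        · exact norm_one_add_mul_exp_le ha0 ha2
    _ = _ := by ring

lemma norm_geom_sum_le_mul_exp {d : ℕ} (hd : 2 ≤ d) {a t : ℝ}
    (ha1 : (2 * Real.exp 1)⁻¹ ≤ a) (ha2 : a ≤ 2) :
    ‖∑ j ∈ Finset.range d, ((a : ℂ) * Complex.exp ((2 * π * t : ℝ) * Complex.I)) ^ j‖ ≤
      (∑ j ∈ Finset.range d, a ^ j) * Real.exp (-(Real.exp 1 * 2 ^ d)⁻¹ * nintDist t ^ 2) := by
  have he := Real.exp_pos 1
  have ha0 : 0 ≤ a := le_trans (by positivity) ha1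
  set S := ∑ j ∈ Finset.range d, a ^ j
  set c := (Real.exp 1 * 2 ^ d)⁻¹
  set δ := nintDist t
  have hS0 : 0 ≤ S := Finset.sum_nonneg fun j _ => pow_nonneg ha0 j
  have hSc : S * c ≤ (Real.exp 1)⁻¹ := by
    calc S * c ≤ 2 ^ d * c := by gcongr; exact geom_sum_le_two_pow ha0 ha2 d
      _ = (Real.exp 1)⁻¹ := by simp only [c]; field_simp
  have hloss : 4 * (Real.exp 1)⁻¹ * δ ^ 2 ≤ a * (1 - Real.cos (2 * π * t)) := by
    calc 4 * (Real.exp 1)⁻¹ * δ ^ 2 = (2 * Real.exp 1)⁻¹ * (8 * δ ^ 2) := by field_simp; ring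
      _ ≤ a * (1 - Real.cos (2 * π * t)) :=
        mul_le_mul ha1 (eight_mul_nintDist_sq_le_one_sub_cos t) (by positivity) ha0
  calc _ ≤ S - a * (1 - Real.cos (2 * π * t)) / 3 := norm_geom_sum_le_sub hd ha0 ha2
    _ ≤ S * (1 - c * δ ^ 2) := by nlinarith [sq_nonneg δ, inv_pos.2 he]
    _ ≤ S * Real.exp (-c * δ ^ 2) := by
        gcongr; linarith [Real.add_one_le_exp (-c * δ ^ 2)]

lemma norm_geom_sum_sub_one_le {R : Type*} [SeminormedRing R] {w : R} {c : ℝ} (hc : c ≤ 1)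
    (hw : ‖w‖ ≤ 2 * c) {d : ℕ} (hd : 1 ≤ d) :
    ‖∑ j ∈ Finset.range d, w ^ j - 1‖ ≤ 2 ^ d * c := by
  obtain ⟨n, rfl⟩ := Nat.exists_eq_add_of_le' hd
  have hc0 : 0 ≤ c := by linarith [norm_nonneg w]
  have hterm (j : ℕ) : ‖w ^ (j + 1)‖ ≤ 2 ^ (j + 1) * c :=
    calc ‖w ^ (j + 1)‖ ≤ ‖w‖ ^ (j + 1) := norm_pow_le' w j.succ_pos
      _ ≤ (2 * c) ^ (j + 1) := by gcongr
      _ = 2 ^ (j + 1) * c ^ (j + 1) := mul_pow _ _ _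
      _ ≤ 2 ^ (j + 1) * c := by gcongr; exact pow_le_of_le_one hc0 hc j.succ_ne_zero
  have hgeom := geom_sum_le_two_pow zero_le_two le_rfl (n + 1)
  rw [Finset.sum_range_succ', pow_zero] at hgeom
  rw [Finset.sum_range_succ', pow_zero, add_sub_cancel_right]
  calc ‖∑ j ∈ Finset.range n, w ^ (j + 1)‖ ≤ ∑ j ∈ Finset.range n, 2 ^ (j + 1) * c :=
        (norm_sum_le _ _).trans (Finset.sum_le_sum fun j _ => hterm j)
    _ ≤ 2 ^ (n + 1) * c := by rw [← Finset.sum_mul]; gcongr; linarith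

lemma multipliable_of_summable_norm_sub_one {ι R : Type*} [NormedCommRing R] [NormOneClass R]
    [CompleteSpace R] {f : ι → R} (hf : Summable fun i => ‖f i - 1‖) : Multipliable f := by
  simpa using multipliable_one_add_of_summable hf

lemma hasProd_le_of_nonneg {ι : Type*} {f g : ι → ℝ} {a b : ℝ} (hf0 : ∀ i, 0 ≤ f i)
    (hfg : ∀ i, f i ≤ g i) (hf : HasProd f a) (hg : HasProd g b) : a ≤ b :=
  le_of_tendsto_of_tendsto' hf hg fun _ =>
    Finset.prod_le_prod (fun i _ => hf0 i) fun i _ => hfg i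

lemma hasProd_mulIndicator_exp {β : Type*} {s t : Set β} (hst : (s ∩ t).Finite) (c : ℝ)
    (ψ : β → ℝ) :
    HasProd (fun b : s => t.mulIndicator (fun b => Real.exp (c * ψ b)) b)
      (Real.exp (c * ∑' b : ↑(s ∩ t), ψ b)) := by
  have : Finite ↑(s ∩ t) := hst.to_subtype
  have h := ((Summable.of_finite (f := fun b : ↑(s ∩ t) => ψ b)).hasSum.mul_left c).rexp
  refine (hasProd_subtype_iff_mulIndicator (f := t.mulIndicator _)).2 ?_
  rw [Set.mulIndicator_mulIndicator]
  exact hasProd_subtype_iff_mulIndicator.1 h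

lemma exp_neg_add_two_pi_I_mul_pow (r y : ℝ) (n : ℕ) :
    Complex.exp (-(r : ℂ) + 2 * π * Complex.I * y) ^ n =
      ((Real.exp (-r) ^ n : ℝ) : ℂ) * Complex.exp ((2 * π * (n * y) : ℝ) * Complex.I) := by
  rw [← Complex.exp_nat_mul, Complex.ofReal_pow, Complex.ofReal_exp, ← Complex.exp_nat_mul,
    ← Complex.exp_add]
  congr 1
  push_cast
  ring

lemma norm_geom_sum_le_mul_mulIndicator {d : ℕ} (hd : 2 ≤ d) {u r : ℝ}
    (hu : u ∈ Icc (1 / 2 : ℝ) 2) (hr : 0 < r) (y : ℝ) (n : ℕ) :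
    ‖∑ j ∈ Finset.range d, ((u : ℂ) * Complex.exp (-(r : ℂ) + 2 * π * Complex.I * y) ^ n) ^ j‖ ≤
      (∑ j ∈ Finset.range d, (u * Real.exp (-r) ^ n) ^ j) *
        {k : ℕ | (k : ℝ) * r ≤ 1}.mulIndicator
          (fun k => Real.exp (-(Real.exp 1 * 2 ^ d)⁻¹ * nintDist (k * y) ^ 2)) n := by
  obtain ⟨hu1, hu2⟩ := hu
  have hxn : Real.exp (-r) ^ n = Real.exp (-(n * r)) := by rw [← Real.exp_nat_mul]; ring_nf
  have hxn1 : Real.exp (-r) ^ n ≤ 1 :=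
    pow_le_one₀ (Real.exp_nonneg _) (Real.exp_le_one_iff.2 (by linarith))
  have ha0 : 0 ≤ u * Real.exp (-r) ^ n := by positivity
  have ha2 : u * Real.exp (-r) ^ n ≤ 2 := by nlinarith [pow_nonneg (Real.exp_nonneg (-r)) n]
  rw [exp_neg_add_two_pi_I_mul_pow, ← mul_assoc, ← Complex.ofReal_mul]
  by_cases hn : (n : ℝ) * r ≤ 1
  · rw [Set.mulIndicator_of_mem (show n ∈ {k : ℕ | (k : ℝ) * r ≤ 1} from hn)]
    refine norm_geom_sum_le_mul_exp hd ?_ ha2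
    calc (2 * Real.exp 1)⁻¹ = 1 / 2 * Real.exp (-1) := by rw [Real.exp_neg]; ring
      _ ≤ u * Real.exp (-r) ^ n := by rw [hxn]; gcongr
  · rw [Set.mulIndicator_of_notMem (show n ∉ {k : ℕ | (k : ℝ) * r ≤ 1} from hn), mul_one]
    exact (norm_sum_le _ _).trans_eq (by simp only [norm_pow, norm_ofReal_mul_exp_mul_I ha0])

theorem norm_tprod_geom_sum_le (s : Set ℕ) {d : ℕ} (hd : 2 ≤ d) {u r : ℝ}
    (hu : u ∈ Icc (1 / 2 : ℝ) 2) (hr : 0 < r) (y : ℝ) :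
    ‖∏' h : s, ∑ j ∈ Finset.range d,
        ((u : ℂ) * Complex.exp (-(r : ℂ) + 2 * π * Complex.I * y) ^ (h : ℕ)) ^ j‖ ≤
      (∏' h : s, ∑ j ∈ Finset.range d, (u * Real.exp (-r) ^ (h : ℕ)) ^ j) *
        Real.exp (-(Real.exp 1 * 2 ^ d)⁻¹ *
          ∑' h : {h | h ∈ s ∧ (h : ℝ) * r ≤ 1}, nintDist ((h : ℕ) * y) ^ 2) := by
  set x := Real.exp (-r)
  have hx0 : 0 ≤ x := Real.exp_nonneg _
  have hx1 : x < 1 := Real.exp_lt_one_iff.2 (by linarith)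
  have hu0 : 0 ≤ u := by linarith [hu.1]
  have hux (n : ℕ) : u * x ^ n ≤ 2 * x ^ n := by nlinarith [hu.2, pow_nonneg hx0 n]
  have hsum : Summable fun h : s => 2 ^ d * x ^ (h : ℕ) :=
    ((summable_geometric_of_lt_one hx0 hx1).subtype s).mul_left _
  have hf : Multipliable fun h : s => ∑ j ∈ Finset.range d,
      ((u : ℂ) * Complex.exp (-(r : ℂ) + 2 * π * Complex.I * y) ^ (h : ℕ)) ^ j := by
    refine multipliable_of_summable_norm_sub_one <| hsum.of_nonneg_of_le (fun _ => norm_nonneg _)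
      fun h => norm_geom_sum_sub_one_le (pow_le_one₀ hx0 hx1.le) ?_ (by omega)
    rw [exp_neg_add_two_pi_I_mul_pow, ← mul_assoc, ← Complex.ofReal_mul,
      norm_ofReal_mul_exp_mul_I (by positivity)]
    exact hux h
  have hg : Multipliable fun h : s => ∑ j ∈ Finset.range d, (u * x ^ (h : ℕ)) ^ j := by
    refine multipliable_of_summable_norm_sub_one <| hsum.of_nonneg_of_le (fun _ => norm_nonneg _)
      fun h => norm_geom_sum_sub_one_le (pow_le_one₀ hx0 hx1.le) ?_ (by omega)
    rw [Real.norm_of_nonneg (by positivity)]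
    exact hux h
  have hfin : (s ∩ {k : ℕ | (k : ℝ) * r ≤ 1}).Finite :=
    (Set.finite_Iic ⌊1 / r⌋₊).subset fun k hk => Nat.le_floor ((le_div_iff₀ hr).2 hk.2)
  rw [hf.norm_tprod]
  exact hasProd_le_of_nonneg (fun _ : s => norm_nonneg _)
    (fun h => norm_geom_sum_le_mul_mulIndicator hd hu hr y (h : ℕ)) hf.norm.hasProd
    (hg.hasProd.mul (hasProd_mulIndicator_exp hfin _ _))

theorem prodF_tail_bound_general (d m : ℕ) (p : Fin m → ℕ)
    (hd : 2 ≤ d) :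
    ∃ C > (0 : ℝ), ∀ u ∈ Set.Icc (1 / 2 : ℝ) 2, ∀ r : ℝ, 0 < r →
      ∀ y ∈ Set.Icc (-(1 / 2) : ℝ) (1 / 2),
        ‖prodF d m p (Complex.exp (-(r : ℂ) + 2 * Real.pi * Complex.I * (y : ℂ))) u‖ ≤
          prodFR d m p (Real.exp (-r)) u *
            Real.exp (-C * ∑' h : multiSr m p r, nintDist ((h : ℕ) * y) ^ 2) := by
  refine ⟨(Real.exp 1 * 2 ^ d)⁻¹, by positivity, fun u hu r hr y _ => ?_⟩
  simp only [prodF, prodFR, pow_mul_pow_mul_eq_mul_pow]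
  exact norm_tprod_geom_sum_le (multiS m p) hd hu hr y

theorem prodF_tail_bound (d m : ℕ) (p : Fin m → ℕ)
    (hd : 2 ≤ d) (hm : 2 ≤ m) (hp : ∀ j, 1 < p j) (hmono : StrictMono p)
    (hcop : ∀ i j, i ≠ j → Nat.Coprime (p i) (p j)) :
    ∃ C > (0 : ℝ), ∀ u ∈ Set.Icc (1 / 2 : ℝ) 2, ∀ r : ℝ, 0 < r →
      ∀ y ∈ Set.Icc (-(1 / 2) : ℝ) (1 / 2),
        ‖prodF d m p (Complex.exp (-(r : ℂ) + 2 * Real.pi * Complex.I * (y : ℂ))) u‖ ≤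
          prodFR d m p (Real.exp (-r)) u *
            Real.exp (-C * ∑' h : multiSr m p r, nintDist ((h : ℕ) * y) ^ 2) :=
  prodF_tail_bound_general d m p hd
end
end

section
/- There exist a constant A₁ > 0 (depending only on m and the bases p₁, …, p_m) and r₀ > 0 such that for all 0 < r < r₀ and all real y with |y| ≤ r/2, one has Σ_{h ∈ S(r)} ‖hy‖² ≥ A₁ · (y/r)² · (log(1/r))^{m−1}. -/
open Filter Set

noncomputable section

lemma nintDist_eq_abs {x : ℝ} (hx : |x| ≤ 1/2) : nintDist x = |x| := by
  rw [abs_le] at hx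
  rcases lt_or_eq_of_le hx.2 with h | h
  · have h0 : round x = 0 := by
      rw [round_eq, Int.floor_eq_zero_iff]
      constructor
      · simpa using by linarith [hx.1]
      · simpa using by linarith
    rw [nintDist, h0]; simp
  · rw [nintDist, h]; norm_num [round_eq]

lemma prod_pow_exp_inj (m : ℕ) (p : Fin m → ℕ) (hp : ∀ j, 1 < p j)
    (hcop : ∀ i j, i ≠ j → Nat.Coprime (p i) (p j)) :
    Function.Injective (fun α : Fin m → ℕ => ∏ j, p j ^ α j) := by
  intro α β hEq
  simp only at hEq
  funext i
  have hpne1 : p i ≠ 1 := (hp i).ne'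
  obtain ⟨q, hq, hqd⟩ := Nat.exists_prime_and_dvd hpne1
  have hpj0 : ∀ j, p j ≠ 0 := fun j => (Nat.lt_of_lt_of_le Nat.zero_lt_one (hp j).le).ne'
  have hfac : ∀ j, j ≠ i → (p j).factorization q = 0 := by
    intro j hj
    apply Nat.factorization_eq_zero_of_not_dvd
    intro hdvd
    have h1 : q ∣ Nat.gcd (p i) (p j) := Nat.dvd_gcd hqd hdvd
    rw [(hcop i j (Ne.symm hj)).gcd_eq_one] at h1
    exact hq.one_lt.ne' (Nat.dvd_one.mp h1)
  have key : ∀ γ : Fin m → ℕ, (∏ j, p j ^ γ j).factorization q = γ i * (p i).factorization q := by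
    intro γ
    rw [Nat.factorization_prod (fun j _ => pow_ne_zero _ (hpj0 j)), Finsupp.finset_sum_apply]
    rw [Finset.sum_eq_single i]
    · rw [Nat.factorization_pow]; simp
    · intro j _ hj; rw [Nat.factorization_pow]; simp [hfac j hj]
    · simp
  have hv : 0 < (p i).factorization q := hq.factorization_pos_of_dvd (hpj0 i) hqd
  have h2 := key α
  rw [hEq, key β] at h2
  exact Nat.eq_of_mul_eq_mul_right hv h2.symm

set_option maxHeartbeats 1000000 in
theorem multiSr_sum_lower_bound_small_y (m : ℕ) (p : Fin m → ℕ)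
    (hm : 2 ≤ m) (hp : ∀ j, 1 < p j) (hmono : StrictMono p)
    (hcop : ∀ i j, i ≠ j → Nat.Coprime (p i) (p j)) :
    ∃ A₁ > (0 : ℝ), ∃ r₀ > (0 : ℝ), ∀ r : ℝ, 0 < r → r < r₀ →
      ∀ y : ℝ, |y| ≤ r / 2 →
        A₁ * (y / r) ^ 2 * (Real.log (1 / r)) ^ (m - 1) ≤
          ∑' h : multiSr m p r, nintDist ((h : ℕ) * y) ^ 2 := by
  obtain ⟨n, rfl⟩ : ∃ n, m = n + 2 := ⟨m - 2, by omega⟩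
  set pL : ℕ := p (Fin.last (n + 1)) with hpLdef
  have hpL1 : (1 : ℝ) < pL := by exact_mod_cast hp _
  have hpLpos : (0 : ℝ) < pL := lt_trans one_pos hpL1
  have hlogpL : 0 < Real.log pL := Real.log_pos hpL1
  have hp0 : (1 : ℝ) < p 0 := by exact_mod_cast hp 0
  have hp0pos : (0 : ℝ) < p 0 := lt_trans one_pos hp0
  refine ⟨1 / ((p 0 : ℝ) ^ 2 * ((n + 1) * Real.log pL) ^ (n + 1)), by positivity,
    1, one_pos, ?_⟩
  intro r hr hr1 y hy
  set X : ℝ := 1 / r with hXdef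
  have hXpos : 0 < X := by positivity
  have hX1 : 1 < X := by rw [hXdef, lt_div_iff₀ hr]; linarith
  have hlogX : 0 < Real.log X := Real.log_pos hX1
  set K : ℕ := ⌊Real.logb pL X / (n + 1)⌋₊ with hKdef
  set Qf : (Fin (n + 1) → ℕ) → ℕ := fun β => ∏ j : Fin (n + 1), p j.succ ^ β j with hQf
  have hQpos : ∀ β, 0 < Qf β := by
    intro β
    exact Finset.prod_pos fun j _ => pow_pos (Nat.lt_of_lt_of_le Nat.zero_lt_one (hp _).le) _
  set T : Finset (Fin (n + 1) → ℕ) :=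
    Fintype.piFinset (fun _ => Finset.range (K + 1)) with hTdef
  have hmemT : ∀ β ∈ T, ∀ j, β j ≤ K := by
    intro β hβ j
    have := Fintype.mem_piFinset.mp hβ j
    rw [Finset.mem_range] at this; omega
  -- Q ≤ X for β ∈ T
  have hQle : ∀ β ∈ T, (Qf β : ℝ) ≤ X := by
    intro β hβ
    have h1 : (Qf β : ℝ) ≤ ((pL : ℝ) ^ K) ^ (n + 1) := by
      rw [hQf]
      push_cast
      calc ∏ j : Fin (n + 1), (p j.succ : ℝ) ^ β j
          ≤ ∏ _j : Fin (n + 1), (pL : ℝ) ^ K := by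
            apply Finset.prod_le_prod
            · intro j _; positivity
            · intro j _
              calc (p j.succ : ℝ) ^ β j ≤ (pL : ℝ) ^ β j := by
                    apply pow_le_pow_left₀ (by positivity)
                    exact_mod_cast hmono.monotone (Fin.le_last _)
                _ ≤ (pL : ℝ) ^ K := pow_le_pow_right₀ hpL1.le (hmemT β hβ j)
        _ = ((pL : ℝ) ^ K) ^ (n + 1) := by
            rw [Finset.prod_const, Finset.card_univ, Fintype.card_fin]
    have h2 : ((pL : ℝ) ^ K) ^ (n + 1) = (pL : ℝ) ^ (K * (n + 1)) := by
      rw [← pow_mul]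
    have hKb : ((K * (n + 1) : ℕ) : ℝ) ≤ Real.logb pL X := by
      push_cast
      have hfl : (K : ℝ) ≤ Real.logb pL X / (n + 1) :=
        Nat.floor_le (div_nonneg (Real.logb_nonneg hpL1 hX1.le) (by positivity))
      rw [div_eq_mul_inv] at hfl
      have : (0:ℝ) < (n:ℝ) + 1 := by positivity
      calc (K : ℝ) * ((n : ℝ) + 1) ≤ Real.logb pL X * ((n:ℝ)+1)⁻¹ * ((n:ℝ)+1) := by
            apply mul_le_mul_of_nonneg_right hfl (by positivity)
        _ = Real.logb pL X := by field_simp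
    have h3 : (pL : ℝ) ^ (K * (n + 1)) ≤ X := by
      have := Real.rpow_le_rpow_of_exponent_le hpL1.le hKb
      rwa [Real.rpow_natCast, Real.rpow_logb hpLpos hpL1.ne' hXpos] at this
    linarith
  -- the adjusting exponent
  set af : (Fin (n + 1) → ℕ) → ℕ :=
    fun β => ⌊Real.logb (p 0) (X / Qf β)⌋₊ with haf
  have hQposR : ∀ β, (0:ℝ) < (Qf β : ℝ) := fun β => by exact_mod_cast hQpos β
  have harg1 : ∀ β ∈ T, (1:ℝ) ≤ X / Qf β := by
    intro β hβ
    rw [le_div_iff₀ (hQposR β)]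
    simpa using hQle β hβ
  have hA1 : ∀ β ∈ T, ((p 0 : ℝ)) ^ af β ≤ X / Qf β := by
    intro β hβ
    have hfl : ((af β : ℕ) : ℝ) ≤ Real.logb (p 0) (X / Qf β) :=
      Nat.floor_le (Real.logb_nonneg hp0 (harg1 β hβ))
    have := Real.rpow_le_rpow_of_exponent_le hp0.le hfl
    rwa [Real.rpow_natCast, Real.rpow_logb hp0pos hp0.ne'
      (div_pos hXpos (hQposR β))] at this
  have hA2 : ∀ β ∈ T, X / Qf β < ((p 0 : ℝ)) ^ (af β + 1) := by
    intro β hβ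
    have hfl : Real.logb (p 0) (X / Qf β) < ((af β + 1 : ℕ) : ℝ) := by
      push_cast
      exact Nat.lt_floor_add_one _
    have := Real.rpow_lt_rpow_of_exponent_lt hp0 hfl
    rwa [Real.rpow_natCast, Real.rpow_logb hp0pos hp0.ne'
      (div_pos hXpos (hQposR β))] at this
  set hfun : (Fin (n + 1) → ℕ) → ℕ := fun β => p 0 ^ af β * Qf β with hhfun
  have hfle : ∀ β ∈ T, (hfun β : ℝ) ≤ X := by
    intro β hβ
    have := hA1 β hβ
    rw [le_div_iff₀ (hQposR β)] at this
    rw [hhfun]; push_cast; exact this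
  have hfgt : ∀ β ∈ T, X / (p 0 : ℝ) < (hfun β : ℝ) := by
    intro β hβ
    have h2 := hA2 β hβ
    rw [div_lt_iff₀ (hQposR β)] at h2
    rw [div_lt_iff₀ hp0pos]
    rw [hhfun]; push_cast
    calc X < (p 0:ℝ) ^ (af β + 1) * Qf β := h2
      _ = (p 0:ℝ) ^ af β * (Qf β : ℝ) * (p 0 : ℝ) := by ring
  have hprodeq : ∀ β, hfun β = ∏ j : Fin (n + 2), p j ^ (Fin.cons (af β) β : Fin (n+2) → ℕ) j := by
    intro β
    rw [Fin.prod_univ_succ]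
    simp [hhfun, hQf]
  have hmem : ∀ β ∈ T, hfun β ∈ multiSr (n + 2) p r := by
    intro β hβ
    refine ⟨⟨Fin.cons (af β) β, hprodeq β⟩, ?_⟩
    have := hfle β hβ
    rw [hXdef, le_div_iff₀ hr] at this
    exact this
  have hinjT : ∀ β ∈ T, ∀ β' ∈ T, hfun β = hfun β' → β = β' := by
    intro β _ β' _ h
    rw [hprodeq β, hprodeq β'] at h
    have := prod_pow_exp_inj (n + 2) p hp hcop h
    funext j
    have := congrFun this j.succ
    simpa [Fin.cons_succ] using this
  -- finiteness of S(r)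
  have hfin : (multiSr (n + 2) p r).Finite := by
    apply Set.Finite.subset (Set.finite_Iic ⌊X⌋₊)
    intro h hh
    simp only [Set.mem_Iic]
    apply Nat.le_floor
    have := hh.2
    rw [← le_div_iff₀ hr] at this
    exact this
  have hsumT : ∑ β ∈ T, nintDist ((hfun β : ℝ) * y) ^ 2
      ≤ ∑' h : multiSr (n + 2) p r, nintDist ((h : ℕ) * y) ^ 2 := by
    rw [tsum_subtype (multiSr (n + 2) p r) (fun h : ℕ => nintDist ((h : ℝ) * y) ^ 2)]
    have hsummable : Summable (Set.indicator (multiSr (n + 2) p r)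
        (fun h : ℕ => nintDist ((h : ℝ) * y) ^ 2)) := by
      apply summable_of_ne_finset_zero (s := hfin.toFinset)
      intro i hi
      apply Set.indicator_of_notMem
      simpa using hi
    have hnonneg : ∀ i ∉ T.image hfun, 0 ≤ Set.indicator (multiSr (n + 2) p r)
        (fun h : ℕ => nintDist ((h : ℝ) * y) ^ 2) i := by
      intro i _
      exact Set.indicator_apply_nonneg (fun _ => by positivity)
    refine le_trans ?_ (Summable.sum_le_tsum (T.image hfun) hnonneg hsummable)
    rw [Finset.sum_image hinjT]
    apply le_of_eq
    apply Finset.sum_congr rfl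
    intro β hβ
    rw [Set.indicator_of_mem (hmem β hβ)]
  have hterm : ∀ β ∈ T, (X / (p 0:ℝ)) ^ 2 * y ^ 2 ≤ nintDist ((hfun β : ℝ) * y) ^ 2 := by
    intro β hβ
    have habs : |(hfun β : ℝ) * y| ≤ 1 / 2 := by
      rw [abs_mul, abs_of_nonneg (by positivity : (0:ℝ) ≤ (hfun β : ℝ))]
      calc (hfun β : ℝ) * |y| ≤ X * (r / 2) := by
            apply mul_le_mul (hfle β hβ) hy (abs_nonneg y) hXpos.le
        _ = 1 / 2 := by rw [hXdef]; field_simp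
    rw [nintDist_eq_abs habs, sq_abs, mul_pow]
    apply mul_le_mul_of_nonneg_right _ (sq_nonneg y)
    apply pow_le_pow_left₀ (by positivity) (hfgt β hβ).le
  have hcard : (T.card : ℝ) = ((K : ℝ) + 1) ^ (n + 1) := by
    rw [hTdef, Fintype.card_piFinset]
    push_cast [Finset.card_range]
    rw [Finset.prod_const, Finset.card_univ, Fintype.card_fin]
  have hsum2 : ((K : ℝ) + 1) ^ (n + 1) * ((X / (p 0:ℝ)) ^ 2 * y ^ 2)
      ≤ ∑ β ∈ T, nintDist ((hfun β : ℝ) * y) ^ 2 := by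
    have := Finset.card_nsmul_le_sum T (fun β => nintDist ((hfun β : ℝ) * y) ^ 2)
      ((X / (p 0:ℝ)) ^ 2 * y ^ 2) hterm
    rwa [nsmul_eq_mul, hcard] at this
  -- final arithmetic
  have hKlog : Real.log X ≤ ((n:ℝ) + 1) * Real.log pL * ((K:ℝ) + 1) := by
    have hfl : Real.logb pL X / ((n:ℝ) + 1) < (K:ℝ) + 1 := by
      have := Nat.lt_floor_add_one (Real.logb pL X / ((n:ℝ) + 1))
      rw [← hKdef] at this
      exact_mod_cast this
    rw [div_lt_iff₀ (by positivity : (0:ℝ) < (n:ℝ)+1), Real.logb, div_lt_iff₀ hlogpL] at hfl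
    nlinarith [hlogpL, hfl]
  have hpow : (Real.log X) ^ (n + 1)
      ≤ (((n:ℝ) + 1) * Real.log pL) ^ (n + 1) * ((K:ℝ) + 1) ^ (n + 1) := by
    rw [← mul_pow]
    exact pow_le_pow_left₀ hlogX.le hKlog _
  have hyr : y / r = y * X := by rw [hXdef]; ring
  have hCpos : (0:ℝ) < (((n:ℝ) + 1) * Real.log pL) ^ (n + 1) := by positivity
  have hmain : 1 / ((p 0 : ℝ) ^ 2 * ((n + 1) * Real.log pL) ^ (n + 1)) * (y / r) ^ 2 *
      (Real.log X) ^ (n + 1) ≤ ((K : ℝ) + 1) ^ (n + 1) * ((X / (p 0:ℝ)) ^ 2 * y ^ 2) := by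
    rw [hyr]
    rw [div_pow X]
    rw [div_mul_eq_mul_div, div_mul_eq_mul_div, one_mul, div_le_iff₀ (by positivity)]
    calc (y * X) ^ 2 * Real.log X ^ (n + 1)
        ≤ (y * X) ^ 2 * ((((n:ℝ) + 1) * Real.log pL) ^ (n + 1) * ((K:ℝ) + 1) ^ (n + 1)) := by
          apply mul_le_mul_of_nonneg_left hpow (by positivity)
      _ = ((K:ℝ) + 1) ^ (n + 1) * (X ^ 2 / (p 0:ℝ) ^ 2 * y ^ 2) *
            ((p 0:ℝ) ^ 2 * (((n:ℝ) + 1) * Real.log pL) ^ (n + 1)) := by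
          field_simp
  have hfinal : (n + 2) - 1 = n + 1 := rfl
  rw [hfinal]
  calc 1 / ((p 0 : ℝ) ^ 2 * ((n + 1) * Real.log pL) ^ (n + 1)) * (y / r) ^ 2 *
        (Real.log (1/r)) ^ (n + 1)
      ≤ ((K : ℝ) + 1) ^ (n + 1) * ((X / (p 0:ℝ)) ^ 2 * y ^ 2) := hmain
    _ ≤ ∑ β ∈ T, nintDist ((hfun β : ℝ) * y) ^ 2 := hsum2
    _ ≤ _ := hsumT

end
end

section
/- There exist a constant c₁ > 0 (depending only on m and the bases p₁, …, p_m) and r₀ > 0 such that for every 0 < r < r₀ and all coprime integers a and q with 1 ≤ q ≤ r^{−2/3}, the number of elements h₁ ∈ S(r^{1/3}) with ‖a·h₁/q‖ ≥ 1/q is at least c₁ · (log q) · (log(1/r))^{m−1}. -/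
open Filter Set

noncomputable section

/-! Since `a` is a unit mod `q` and `‖k / q‖ ≥ 1 / q` whenever `q ∤ k`, it suffices to find many
`h = ∏ p j ^ α j ≤ r ^ (-1/3)` with `q ∤ h`. Let `i` be the index for which the `p i`-part
`gcd q (p i ^ q)` of `q` is largest; then `q ∣ h` forces `q ≤ (p i ^ α i) ^ m`. So the box
`α j * log (p j) < log (1/r) / (3m)` for `j ≠ i` and `α i * log (p i) < log q / (2m)` consists of
such `h`, and it has `≫ log q * log (1/r) ^ (m - 1)` points because `α ↦ h` is injective. -/

open Function

theorem gcd_prod_dvd_prod_gcd {α ι : Type*} [CommMonoidWithZero α] [GCDMonoid α]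
    (k : α) (s : Finset ι) (f : ι → α) : gcd k (∏ i ∈ s, f i) ∣ ∏ i ∈ s, gcd k (f i) := by
  classical
  induction s using Finset.induction_on with
  | empty => simp
  | insert a s ha ih =>
    rw [Finset.prod_insert ha, Finset.prod_insert ha]
    exact (gcd_mul_dvd_mul_gcd k _ _).trans (mul_dvd_mul_left _ ih)

namespace Nat

theorem gcd_pow_dvd_gcd_pow_self {q n : ℕ} (hq : q ≠ 0) (hn : n ≠ 0) (k : ℕ) :
    q.gcd (n ^ k) ∣ q.gcd (n ^ q) := by
  set d := q.gcd (n ^ k)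
  have hd : d ≠ 0 := Nat.gcd_ne_zero_left hq
  have hd_pow : d ∣ n ^ d :=
    (dvd_pow_self_iff hd hn).mpr ((exists_dvd_pow_iff hd hn).mp ⟨k, Nat.gcd_dvd_right _ _⟩)
  have hdq : d ≤ q := Nat.le_of_dvd (Nat.pos_of_ne_zero hq) (Nat.gcd_dvd_left _ _)
  exact Nat.dvd_gcd (Nat.gcd_dvd_left _ _) (hd_pow.trans (Nat.pow_dvd_pow n hdq))

variable {ι : Type*} [Fintype ι] {p : ι → ℕ}

theorem factorization_prod_pow_of_dvd (hp : ∀ j, p j ≠ 0) (hcop : Pairwise (Coprime on p))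
    (α : ι → ℕ) {ℓ : ℕ} {i : ι} (hℓ : ℓ.Prime) (hℓi : ℓ ∣ p i) :
    (∏ j, p j ^ α j).factorization ℓ = α i * (p i).factorization ℓ := by
  rw [factorization_prod fun j _ => pow_ne_zero _ (hp j), Finset.sum_apply',
    Finset.sum_eq_single i _ (by simp)]
  · simp [factorization_pow]
  intro j _ hji
  have hℓj : ¬ ℓ ∣ p j :=
    (hℓ.coprime_iff_not_dvd).mp (Coprime.coprime_dvd_left hℓi (hcop hji.symm))
  simp [factorization_pow, factorization_eq_zero_of_not_dvd hℓj]

theorem prod_pow_injective (hp : ∀ j, 1 < p j) (hcop : Pairwise (Coprime on p)) :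
    Injective fun α : ι → ℕ => ∏ j, p j ^ α j := by
  intro α β h
  funext i
  have hp0 : ∀ j, p j ≠ 0 := fun j => (zero_lt_one.trans (hp j)).ne'
  have hℓ := minFac_prime (hp i).ne'
  have hv : 0 < (p i).factorization (p i).minFac :=
    hℓ.factorization_pos_of_dvd (hp0 i) (minFac_dvd _)
  have := factorization_prod_pow_of_dvd hp0 hcop α hℓ (minFac_dvd _)
  rw [show (∏ j, p j ^ α j) = ∏ j, p j ^ β j from h,
    factorization_prod_pow_of_dvd hp0 hcop β hℓ (minFac_dvd _)] at this
  exact (Nat.eq_of_mul_eq_mul_right hv this).symm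

theorem exists_le_pow_card_of_dvd_prod_pow [Nonempty ι] (hp : ∀ j, p j ≠ 0)
    (hcop : Pairwise (Coprime on p)) {q : ℕ} (hq : q ≠ 0) :
    ∃ i, ∀ α : ι → ℕ, q ∣ ∏ j, p j ^ α j → q ≤ (p i ^ α i) ^ Fintype.card ι := by
  classical
  set Q : ι → ℕ := fun j => q.gcd (p j ^ q)
  obtain ⟨i, -, hi⟩ := Finset.exists_max_image Finset.univ Q Finset.univ_nonempty
  refine ⟨i, fun α hdvd => ?_⟩
  have hq_dvd : q ∣ ∏ j, Q j :=
    calc q = q.gcd (∏ j, p j ^ α j) := (Nat.gcd_eq_left hdvd).symm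
      _ ∣ ∏ j, q.gcd (p j ^ α j) := gcd_prod_dvd_prod_gcd q _ _
      _ ∣ ∏ j, Q j := Finset.prod_dvd_prod_of_dvd _ _ fun j _ =>
          gcd_pow_dvd_gcd_pow_self hq (hp j) (α j)
  have hQi : Q i ∣ p i ^ α i := by
    have hcop_rest : (Q i).Coprime (∏ j ∈ Finset.univ.erase i, p j ^ α j) :=
      Coprime.prod_right fun j hj => Coprime.coprime_dvd_left (Nat.gcd_dvd_right _ _)
        ((hcop (Finset.ne_of_mem_erase hj).symm).pow _ _)
    refine hcop_rest.dvd_of_dvd_mul_right ?_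
    rw [Finset.mul_prod_erase _ (fun j => p j ^ α j) (Finset.mem_univ i)]
    exact (Nat.gcd_dvd_left _ _).trans hdvd
  calc q ≤ ∏ j, Q j := Nat.le_of_dvd (Nat.pos_of_ne_zero ?_) hq_dvd
    _ ≤ Q i ^ Fintype.card ι := Finset.prod_le_pow_card _ _ _ fun j _ => hi j (Finset.mem_univ j)
    _ ≤ (p i ^ α i) ^ Fintype.card ι :=
        Nat.pow_le_pow_left (Nat.le_of_dvd (Nat.pos_of_ne_zero (pow_ne_zero _ (hp i))) hQi) _
  exact Finset.prod_ne_zero_iff.mpr fun j _ => Nat.gcd_ne_zero_left hq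

end Nat

theorem Fintype.prod_update_const {ι M : Type*} [Fintype ι] [DecidableEq ι] [CommMonoid M]
    (i : ι) (x y : M) : ∏ j, update (fun _ => y) i x j = x * y ^ (Fintype.card ι - 1) := by
  rw [Finset.prod_update_of_mem (Finset.mem_univ i), Finset.prod_const,
    Finset.card_sdiff_of_subset (by simp), Finset.card_singleton, Finset.card_univ]

theorem Real.log_natCast_prod_pow {ι : Type*} [Fintype ι] {p : ι → ℕ} (hp : ∀ j, p j ≠ 0)
    (α : ι → ℕ) : Real.log ((∏ j, p j ^ α j : ℕ) : ℝ) = ∑ j, α j * Real.log (p j) := by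
  push_cast
  rw [Real.log_prod fun j _ => pow_ne_zero _ (by exact_mod_cast hp j)]
  simp only [Real.log_pow]

theorem one_div_le_nintDist_div {k : ℤ} {q : ℕ} (hk : ¬ (q : ℤ) ∣ k) :
    1 / (q : ℝ) ≤ nintDist (k / q) := by
  rcases Nat.eq_zero_or_pos q with rfl | hq
  · simp [nintDist]
  have hq' : (0 : ℝ) < q := by exact_mod_cast hq
  set n := round ((k : ℝ) / q)
  have hdist : nintDist (k / q) = |((k - q * n : ℤ) : ℝ)| / q := by
    rw [nintDist, ← abs_of_pos hq', ← abs_div, abs_of_pos hq']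
    congr 1
    push_cast
    field_simp
    rfl
  have hne : k - q * n ≠ 0 := fun h => hk ⟨n, by omega⟩
  rw [hdist]
  gcongr
  exact_mod_cast Int.one_le_abs hne

theorem prod_div_log_le_ncard {ι : Type*} [Fintype ι] {p : ι → ℕ} (hp : ∀ j, 1 < p j)
    (hcop : Pairwise (Nat.Coprime on p)) {b : ι → ℝ} (hb : ∀ j, 0 ≤ b j) {T : Set ℕ}
    (hT : T.Finite) (hmaps : ∀ α : ι → ℕ, (∀ j, α j * Real.log (p j) < b j) → ∏ j, p j ^ α j ∈ T) :
    ∏ j, b j / Real.log (p j) ≤ T.ncard := by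
  classical
  have hlog : ∀ j, 0 < Real.log (p j) := fun j => Real.log_pos (by exact_mod_cast hp j)
  set box := Fintype.piFinset fun j => Finset.range ⌈b j / Real.log (p j)⌉₊
  have hbox : ↑(box.image fun α => ∏ j, p j ^ α j) ⊆ T := by
    rw [Finset.coe_image]
    rintro _ ⟨α, hα, rfl⟩
    refine hmaps α fun j => ?_
    have := Nat.lt_ceil.mp (Finset.mem_range.mp (Fintype.mem_piFinset.mp hα j))
    exact (lt_div_iff₀ (hlog j)).mp this
  calc ∏ j, b j / Real.log (p j) ≤ ∏ j, (⌈b j / Real.log (p j)⌉₊ : ℝ) :=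
        Finset.prod_le_prod (fun j _ => div_nonneg (hb j) (hlog j).le) fun j _ => Nat.le_ceil _
    _ = box.card := by simp [box, Fintype.card_piFinset]
    _ = (box.image fun α => ∏ j, p j ^ α j).card := by
        rw [Finset.card_image_of_injective _ (Nat.prod_pow_injective hp hcop)]
    _ ≤ T.ncard := by
        rw [← Set.ncard_coe_finset]
        exact_mod_cast Set.ncard_le_ncard hbox hT

theorem multiSr_finite (m : ℕ) (p : Fin m → ℕ) {r : ℝ} (hr : 0 < r) : (multiSr m p r).Finite :=
  (Set.finite_Iic ⌊1 / r⌋₊).subset fun _ hh => Nat.le_floor ((le_div_iff₀ hr).mpr hh.2)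

theorem prod_pow_mem_multiSr {m : ℕ} {p : Fin m → ℕ} (hp : ∀ j, p j ≠ 0) {s : ℝ} (hs : 0 < s)
    {α : Fin m → ℕ} (hα : ∑ j, α j * Real.log (p j) ≤ -Real.log s) :
    ∏ j, p j ^ α j ∈ multiSr m p s := by
  refine ⟨⟨α, rfl⟩, ?_⟩
  have hpos : (0 : ℝ) < (∏ j, p j ^ α j : ℕ) := by
    exact_mod_cast Nat.pos_of_ne_zero (Finset.prod_ne_zero_iff.mpr fun j _ => pow_ne_zero _ (hp j))
  rw [← le_div_iff₀ hs, one_div, ← Real.log_le_log_iff hpos (inv_pos.mpr hs), Real.log_inv,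
    Real.log_natCast_prod_pow hp]
  exact hα

theorem prod_div_log_le_ncard_multiSr_far {m : ℕ} {p : Fin m → ℕ} (hp : ∀ j, 1 < p j)
    (hcop : Pairwise (Nat.Coprime on p)) {s : ℝ} (hs : 0 < s) {a : ℤ} {q : ℕ}
    (hco : IsCoprime a q) {i : Fin m}
    (hi : ∀ α : Fin m → ℕ, q ∣ ∏ j, p j ^ α j → q ≤ (p i ^ α i) ^ m)
    {b : Fin m → ℝ} (hb : ∀ j, 0 ≤ b j) (hb_sum : ∑ j, b j ≤ -Real.log s)
    (hbi : m * b i ≤ Real.log q) :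
    ∏ j, b j / Real.log (p j) ≤
      ({h₁ ∈ multiSr m p s | 1 / (q : ℝ) ≤ nintDist ((a : ℝ) * (h₁ : ℝ) / (q : ℝ))}.ncard : ℝ) := by
  have hp0 : ∀ j, p j ≠ 0 := fun j => (zero_lt_one.trans (hp j)).ne'
  refine prod_div_log_le_ncard hp hcop hb ((multiSr_finite m p hs).sep _) fun α hα =>
    ⟨prod_pow_mem_multiSr hp0 hs ((Finset.sum_le_sum fun j _ => (hα j).le).trans hb_sum), ?_⟩
  set h := ∏ j, p j ^ α j
  have hndvd : ¬ q ∣ h := fun hdvd => by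
    have hq : 0 < q := Nat.pos_of_dvd_of_pos hdvd
      (Nat.pos_of_ne_zero (Finset.prod_ne_zero_iff.mpr fun j _ => pow_ne_zero _ (hp0 j)))
    have hle : Real.log q ≤ m * (α i * Real.log (p i)) := by
      have := Real.log_le_log (by positivity)
        (show (q : ℝ) ≤ ((p i ^ α i) ^ m : ℕ) by exact_mod_cast hi α hdvd)
      simpa [Real.log_pow, mul_comm, mul_left_comm, mul_assoc] using this
    have hm : (0 : ℝ) < m := by exact_mod_cast i.pos
    linarith [mul_lt_mul_of_pos_left (hα i) hm]
  have : ¬ (q : ℤ) ∣ a * h := fun hd =>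
    hndvd (Int.natCast_dvd_natCast.mp (hco.symm.dvd_of_dvd_mul_left hd))
  simpa using one_div_le_nintDist_div this

theorem mul_pow_div_pow_le_ncard_multiSr_far {m : ℕ} (hm : 0 < m) {p : Fin m → ℕ}
    (hp : ∀ j, 1 < p j) (hcop : Pairwise (Nat.Coprime on p)) {M : ℝ}
    (hM : ∀ j, Real.log (p j) ≤ M) {s : ℝ} (hs : 0 < s) {a : ℤ} {q : ℕ} (hq : q ≠ 0)
    (hco : IsCoprime a q) {x y : ℝ} (hx : 0 ≤ x) (hxy : x ≤ y) (hy : m * y ≤ -Real.log s)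
    (hxq : m * x ≤ Real.log q) :
    x * y ^ (m - 1) / M ^ m ≤
      ({h₁ ∈ multiSr m p s | 1 / (q : ℝ) ≤ nintDist ((a : ℝ) * (h₁ : ℝ) / (q : ℝ))}.ncard : ℝ) := by
  have : Nonempty (Fin m) := ⟨⟨0, hm⟩⟩
  have hlog : ∀ j, 0 < Real.log (p j) := fun j => Real.log_pos (by exact_mod_cast hp j)
  obtain ⟨i, hi⟩ := Nat.exists_le_pow_card_of_dvd_prod_pow
    (fun j => (zero_lt_one.trans (hp j)).ne') hcop hq
  rw [Fintype.card_fin] at hi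
  set b : Fin m → ℝ := update (fun _ => y) i x
  have hb : ∀ j, 0 ≤ b j ∧ b j ≤ y := by
    intro j
    rcases eq_or_ne j i with rfl | hj
    · simp only [b, update_self]; exact ⟨hx, hxy⟩
    · simp only [b, update_of_ne hj]; exact ⟨hx.trans hxy, le_rfl⟩
  calc x * y ^ (m - 1) / M ^ m = ∏ j, b j / M := by
        rw [Finset.prod_div_distrib, Fintype.prod_update_const, Finset.prod_const,
          Finset.card_univ, Fintype.card_fin]
    _ ≤ ∏ j, b j / Real.log (p j) :=
        Finset.prod_le_prod (fun j _ => div_nonneg (hb j).1 ((hlog j).le.trans (hM j))) fun j _ =>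
          div_le_div_of_nonneg_left (hb j).1 (hlog j) (hM j)
    _ ≤ _ := by
        refine prod_div_log_le_ncard_multiSr_far hp hcop hs hco hi (fun j => (hb j).1) ?_ ?_
        · calc ∑ j, b j ≤ ∑ _j : Fin m, y := Finset.sum_le_sum fun j _ => (hb j).2
            _ ≤ -Real.log s := by simpa using hy
        · simpa [b] using hxq

theorem multiSr_many_elements_far_from_integers_rational_general (m : ℕ) (p : Fin m → ℕ)
    (hm : 2 ≤ m) (hp : ∀ j, 1 < p j)
    (hcop : ∀ i j, i ≠ j → Nat.Coprime (p i) (p j)) :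
    ∃ c₁ > (0 : ℝ), ∃ r₀ > (0 : ℝ), ∀ r : ℝ, 0 < r → r < r₀ →
      ∀ a : ℤ, ∀ q : ℕ, 1 ≤ q → (q : ℝ) ≤ r ^ (-(2 : ℝ) / 3) → IsCoprime a (q : ℤ) →
        c₁ * Real.log q * (Real.log (1 / r)) ^ (m - 1) ≤
          (({h₁ ∈ multiSr m p (r ^ ((1 : ℝ) / 3)) |
              1 / (q : ℝ) ≤ nintDist ((a : ℝ) * (h₁ : ℝ) / (q : ℝ))}).ncard : ℝ) := by
  have hlog : ∀ j, 0 < Real.log (p j) := fun j => Real.log_pos (by exact_mod_cast hp j)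
  set M := ∑ j, Real.log (p j)
  have hM : 0 < M := Finset.sum_pos (fun j _ => hlog j) ⟨⟨0, by omega⟩, Finset.mem_univ _⟩
  refine ⟨(2 * m * (3 * m) ^ (m - 1) * M ^ m)⁻¹, by positivity, 1, one_pos,
    fun r hr _ a q hq hqr hco => ?_⟩
  set L := Real.log (1 / r)
  have hlog_r : Real.log r = -L := by simp [L]
  have hlogq0 : 0 ≤ Real.log q := Real.log_nonneg (by exact_mod_cast hq)
  have hlogq : Real.log q ≤ 2 / 3 * L := by
    have := Real.log_le_log (by positivity) hqr
    rw [Real.log_rpow hr, hlog_r] at this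
    linarith
  calc (2 * m * (3 * m) ^ (m - 1) * M ^ m)⁻¹ * Real.log q * L ^ (m - 1)
      = Real.log q / (2 * m) * (L / (3 * m)) ^ (m - 1) / M ^ m := by
        rw [div_pow]
        field_simp
    _ ≤ _ := by
        refine mul_pow_div_pow_le_ncard_multiSr_far (by omega) hp (fun i j h => hcop i j h)
          (fun j => Finset.single_le_sum (fun k _ => (hlog k).le) (Finset.mem_univ j))
          (Real.rpow_pos_of_pos hr _) (by omega) hco (by positivity) ?_ ?_ ?_
        · rw [div_le_div_iff₀ (by positivity) (by positivity)]
          nlinarith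
        · rw [Real.log_rpow hr, hlog_r]
          field_simp
          linarith
        · field_simp
          linarith

theorem multiSr_many_elements_far_from_integers_rational (m : ℕ) (p : Fin m → ℕ)
    (hm : 2 ≤ m) (hp : ∀ j, 1 < p j) (hmono : StrictMono p)
    (hcop : ∀ i j, i ≠ j → Nat.Coprime (p i) (p j)) :
    ∃ c₁ > (0 : ℝ), ∃ r₀ > (0 : ℝ), ∀ r : ℝ, 0 < r → r < r₀ →
      ∀ a : ℤ, ∀ q : ℕ, 1 ≤ q → (q : ℝ) ≤ r ^ (-(2 : ℝ) / 3) → IsCoprime a (q : ℤ) →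
        c₁ * Real.log q * (Real.log (1 / r)) ^ (m - 1) ≤
          (({h₁ ∈ multiSr m p (r ^ ((1 : ℝ) / 3)) |
              1 / (q : ℝ) ≤ nintDist ((a : ℝ) * (h₁ : ℝ) / (q : ℝ))}).ncard : ℝ) :=
  multiSr_many_elements_far_from_integers_rational_general m p hm hp hcop

end
end
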